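/- Let W_{ij} = exp(−|x_i − x_j|²/ε²) for distinct points x_i on a surface and let M be its row-normalization. Writing L = (4/ε²)(M − I), for the points lying on the unit circle x_j = (cos θ_j, sin θ_j) equally spaced, and the test function v(θ) = cos θ, the vector Lv converges, as N → ∞ and then ε → 0, to the Laplace-Beltrami value Δ_{S¹} v = −cos θ; in particular for fixed N and ε, Σ_j (M_{ij} − δ_{ij}) v_j = (ε²/4)(−cos θ_i) + o(ε²) + O(N^{−1/2}). -/

import Mathlib

open Real Filter MeasureTheory Set intervalIntegral

/-- The discrete Laplacian `(4/ε²) Σ_j (M_{0j} - δ_{0j}) v_j` applied to the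
test function `v(θ) = cos θ` at the base point `θ = 0`, for `N` equally spaced
points on the unit circle with Gaussian weights
`W_{0j} = exp(-(2 - 2cos θ_j)/ε²)` (squared chordal distance) and row
normalization `M_{0j} = W_{0j}/Σ_k W_{0k}`.  Since `Σ_j M_{0j} = 1` and
`cos θ_0 = 1`, this equals `(4/ε²)((Σ_j W_{0j} cos θ_j)/(Σ_j W_{0j}) - 1)`. -/
noncomputable def circleGraphLap (N : ℕ) (ε : ℝ) : ℝ :=
  (4 / ε ^ 2) *
    ((∑ j : Fin N,
        Real.exp (-(2 - 2 * Real.cos (2 * Real.pi * (j : ℝ) / N)) / ε ^ 2) *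
          Real.cos (2 * Real.pi * (j : ℝ) / N)) /
      (∑ j : Fin N,
        Real.exp (-(2 - 2 * Real.cos (2 * Real.pi * (j : ℝ) / N)) / ε ^ 2)) - 1)

lemma exp_neg_lip {u v : ℝ} (hu : 0 ≤ u) (hv : 0 ≤ v) :
    |Real.exp (-u) - Real.exp (-v)| ≤ |u - v| := by
  wlog h : v ≤ u generalizing u v
  · rw [abs_sub_comm, abs_sub_comm u v]; exact this hv hu (le_of_not_ge h)
  rw [abs_of_nonpos (by simp [Real.exp_le_exp]; linarith), abs_of_nonneg (by linarith)]
  have h1 : Real.exp (-u) - Real.exp (-v) = Real.exp (-v) * (Real.exp (-(u - v)) - 1) := by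
    rw [mul_sub, ← Real.exp_add]; ring_nf
  nlinarith [Real.exp_le_one_iff.2 (neg_nonpos.2 hv), Real.exp_pos (-v),
    Real.add_one_le_exp (-(u-v)), Real.exp_pos (-(u-v)), Real.exp_le_one_iff.2 (neg_nonpos.2 hu)]

lemma cos_lip (x y : ℝ) : |Real.cos x - Real.cos y| ≤ |x - y| := by
  rw [Real.cos_sub_cos]
  have h1 : |Real.sin ((x+y)/2)| ≤ 1 := Real.abs_sin_le_one _
  have h2 : |Real.sin ((x-y)/2)| ≤ |(x-y)/2| := Real.abs_sin_le_abs
  have h3 : |(x-y)/2| = |x-y|/2 := by rw [abs_div]; norm_num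
  calc |(-2) * Real.sin ((x+y)/2) * Real.sin ((x-y)/2)|
      = 2 * |Real.sin ((x+y)/2)| * |Real.sin ((x-y)/2)| := by
        rw [abs_mul, abs_mul]; norm_num
    _ ≤ |x - y| := by
        nlinarith [abs_nonneg (Real.sin ((x-y)/2)), abs_nonneg (Real.sin ((x+y)/2)), abs_nonneg (x-y)]

lemma riemann_sum_tendsto {f : ℝ → ℝ} {K : NNReal} (hf : LipschitzWith K f) {b : ℝ} (hb : 0 < b) :
    Tendsto (fun N : ℕ => (b / N) * ∑ j ∈ Finset.range N, f (b * j / N)) atTop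
      (nhds (∫ x in (0:ℝ)..b, f x)) := by
  have hcont := hf.continuous
  rw [tendsto_iff_dist_tendsto_zero]
  apply squeeze_zero' (Eventually.of_forall fun _ => dist_nonneg)
    (g := fun N : ℕ => (K : ℝ) * b ^ 2 / N)
  · filter_upwards [eventually_ge_atTop 1] with N hN
    have hN0 : (N : ℝ) ≠ 0 := by positivity
    have hNpos : (0:ℝ) < N := by positivity
    set a : ℕ → ℝ := fun j => b * j / N with ha
    have hstep : ∀ j : ℕ, a (j + 1) - a j = b / N := by
      intro j; simp only [ha]; push_cast; ring
    have hmono : ∀ j : ℕ, a j ≤ a (j + 1) := by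
      intro j; nlinarith [hstep j, div_pos hb hNpos]
    have hint : ∀ k : ℕ, k < N → IntervalIntegrable f volume (a k) (a (k + 1)) :=
      fun k _ => hcont.intervalIntegrable _ _
    have hsum := intervalIntegral.sum_integral_adjacent_intervals hint
    have ha0 : a 0 = 0 := by simp [ha]
    have haN : a N = b := by simp only [ha]; exact mul_div_cancel_right₀ b hN0
    have hterm : ∀ j : ℕ, (∫ x in a j..a (j + 1), (f (a j) - f x)) =
        b / N * f (a j) - ∫ x in a j..a (j + 1), f x := by
      intro j
      rw [intervalIntegral.integral_sub (intervalIntegrable_const) (hcont.intervalIntegrable _ _),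
        intervalIntegral.integral_const, hstep j, smul_eq_mul]
    have hdiff : (b / N) * (∑ j ∈ Finset.range N, f (b * ↑j / N)) - ∫ x in (0:ℝ)..b, f x
        = ∑ j ∈ Finset.range N, ∫ x in a j..a (j + 1), (f (a j) - f x) := by
      rw [ha0, haN] at hsum
      rw [← hsum, Finset.mul_sum, ← Finset.sum_sub_distrib]
      exact Finset.sum_congr rfl fun j _ => by rw [hterm j]
    rw [Real.dist_eq, hdiff]
    calc |∑ j ∈ Finset.range N, ∫ x in a j..a (j + 1), (f (a j) - f x)|
        ≤ ∑ j ∈ Finset.range N, |∫ x in a j..a (j + 1), (f (a j) - f x)| :=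
          Finset.abs_sum_le_sum_abs _ _
      _ ≤ ∑ j ∈ Finset.range N, (K : ℝ) * (b / N) * (b / N) := by
          apply Finset.sum_le_sum
          intro j _
          have hb1 : ∀ x ∈ Set.uIoc (a j) (a (j + 1)), ‖f (a j) - f x‖ ≤ (K : ℝ) * (b / N) := by
            intro x hx
            rw [Set.uIoc_of_le (hmono j)] at hx
            rw [Real.norm_eq_abs, ← Real.dist_eq]
            calc dist (f (a j)) (f x) ≤ (K : ℝ) * dist (a j) x := hf.dist_le_mul _ _
              _ ≤ (K : ℝ) * (b / N) := by
                  gcongr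
                  rw [Real.dist_eq, abs_sub_comm, abs_of_nonneg (by linarith [hx.1.le])]
                  linarith [hx.2, hstep j]
          have := intervalIntegral.norm_integral_le_of_norm_le_const hb1
          rw [Real.norm_eq_abs] at this
          calc |∫ x in a j..a (j + 1), (f (a j) - f x)| ≤ (K : ℝ) * (b / N) * |a (j+1) - a j| := this
            _ = (K : ℝ) * (b / N) * (b / N) := by
                rw [hstep j, abs_of_nonneg (by positivity)]
      _ = (K : ℝ) * b ^ 2 / N := by
          rw [Finset.sum_const, Finset.card_range, nsmul_eq_mul]
          field_simp
  · exact tendsto_const_div_atTop_nhds_zero_nat _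

noncomputable def wfun (ε θ : ℝ) : ℝ := Real.exp (-(2 - 2 * Real.cos θ) / ε ^ 2)

lemma wfun_eq (ε θ : ℝ) : wfun ε θ = Real.exp (-((2 - 2 * Real.cos θ) / ε ^ 2)) := by
  rw [wfun, neg_div]

lemma wfun_nonneg (ε θ : ℝ) : 0 ≤ wfun ε θ := (Real.exp_pos _).le

lemma exponent_nonneg (ε θ : ℝ) : 0 ≤ (2 - 2 * Real.cos θ) / ε ^ 2 := by
  apply div_nonneg (by nlinarith [Real.cos_le_one θ]) (sq_nonneg ε)

lemma wfun_le_one (ε θ : ℝ) : wfun ε θ ≤ 1 := by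
  rw [wfun_eq]
  exact Real.exp_le_one_iff.2 (neg_nonpos.2 (exponent_nonneg ε θ))

lemma lip_w {ε : ℝ} (hε : 0 < ε) :
    LipschitzWith (Real.toNNReal (2 / ε ^ 2)) (wfun ε) := by
  apply LipschitzWith.of_dist_le_mul
  intro x y
  rw [Real.dist_eq, Real.dist_eq, wfun_eq, wfun_eq, Real.coe_toNNReal _ (by positivity)]
  calc |Real.exp (-((2 - 2 * Real.cos x) / ε ^ 2)) - Real.exp (-((2 - 2 * Real.cos y) / ε ^ 2))|
      ≤ |(2 - 2 * Real.cos x) / ε ^ 2 - (2 - 2 * Real.cos y) / ε ^ 2| :=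
        exp_neg_lip (exponent_nonneg ε x) (exponent_nonneg ε y)
    _ = 2 / ε ^ 2 * |Real.cos y - Real.cos x| := by
        rw [div_sub_div_same,
          show (2 - 2 * Real.cos x - (2 - 2 * Real.cos y)) = 2 * (Real.cos y - Real.cos x) by ring,
          abs_div, abs_mul, abs_of_pos (show (0:ℝ) < ε ^ 2 by positivity),
          abs_of_pos (show (0:ℝ) < 2 by norm_num), mul_div_assoc, div_mul_eq_mul_div, mul_comm]
        ring
    _ ≤ 2 / ε ^ 2 * |x - y| := by
        have h := cos_lip y x
        rw [abs_sub_comm y x] at h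
        exact mul_le_mul_of_nonneg_left h (by positivity)

lemma lip_wc {ε : ℝ} (hε : 0 < ε) :
    LipschitzWith (Real.toNNReal (2 / ε ^ 2 + 1)) (fun θ => wfun ε θ * Real.cos θ) := by
  apply LipschitzWith.of_dist_le_mul
  intro x y
  rw [Real.dist_eq, Real.dist_eq, Real.coe_toNNReal _ (by positivity)]
  have h1 : |wfun ε x * Real.cos x - wfun ε y * Real.cos y|
      ≤ |wfun ε x| * |Real.cos x - Real.cos y| + |Real.cos y| * |wfun ε x - wfun ε y| := by
    calc |wfun ε x * Real.cos x - wfun ε y * Real.cos y|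
        = |wfun ε x * (Real.cos x - Real.cos y) + Real.cos y * (wfun ε x - wfun ε y)| := by
          ring_nf
      _ ≤ _ := by rw [← abs_mul, ← abs_mul]; exact abs_add_le _ _
  have h2 : |wfun ε x| ≤ 1 := by
    rw [abs_of_nonneg (wfun_nonneg ε x)]; exact wfun_le_one ε x
  have h3 : |Real.cos y| ≤ 1 := Real.abs_cos_le_one y
  have h4 : |wfun ε x - wfun ε y| ≤ 2 / ε ^ 2 * |x - y| := by
    have := (lip_w hε).dist_le_mul x y
    rwa [Real.dist_eq, Real.dist_eq, Real.coe_toNNReal _ (by positivity)] at this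
  have h5 := cos_lip x y
  nlinarith [abs_nonneg (Real.cos x - Real.cos y), abs_nonneg (wfun ε x - wfun ε y),
    abs_nonneg (wfun ε x), abs_nonneg (Real.cos y), abs_nonneg (x - y),
    sq_nonneg ε, div_pos (show (0:ℝ)<2 by norm_num) (show (0:ℝ)<ε^2 by positivity)]

noncomputable def Gfun (ε : ℝ) : ℝ :=
  (4 / ε ^ 2) *
    ((∫ θ in (0:ℝ)..(2 * Real.pi), wfun ε θ * Real.cos θ) /
      (∫ θ in (0:ℝ)..(2 * Real.pi), wfun ε θ) - 1)

lemma I0_pos {ε : ℝ} (hε : 0 < ε) : 0 < ∫ θ in (0:ℝ)..(2 * Real.pi), wfun ε θ := by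
  apply intervalIntegral.integral_pos (by positivity)
  · exact ((lip_w hε).continuous).continuousOn
  · exact fun x _ => (Real.exp_pos _).le
  · exact ⟨0, ⟨le_refl 0, by positivity⟩, Real.exp_pos _⟩

lemma part1 {ε : ℝ} (hε : 0 < ε) :
    Tendsto (fun N : ℕ => circleGraphLap N ε) atTop (nhds (Gfun ε)) := by
  have hb : (0:ℝ) < 2 * Real.pi := by positivity
  have h0 := riemann_sum_tendsto (lip_w hε) hb
  have h1 := riemann_sum_tendsto (lip_wc hε) hb
  have hI0 := I0_pos hε
  have hdiv := h1.div h0 hI0.ne'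
  have hmain := (hdiv.sub_const 1).const_mul (4 / ε ^ 2)
  apply hmain.congr'
  filter_upwards [eventually_ge_atTop 1] with N hN
  have hN0 : (2 * Real.pi / N) ≠ 0 := by
    have : (0:ℝ) < N := by exact_mod_cast hN
    positivity
  simp only [circleGraphLap, Pi.div_apply, wfun]
  rw [mul_div_mul_left _ _ hN0,
    Fin.sum_univ_eq_sum_range (fun j : ℕ =>
      Real.exp (-(2 - 2 * Real.cos (2 * Real.pi * (j : ℝ) / N)) / ε ^ 2) *
        Real.cos (2 * Real.pi * (j : ℝ) / N)) N,
    Fin.sum_univ_eq_sum_range (fun j : ℕ =>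
      Real.exp (-(2 - 2 * Real.cos (2 * Real.pi * (j : ℝ) / N)) / ε ^ 2)) N]

lemma integrable_sq_gaussian : Integrable (fun x : ℝ => x ^ 2 * Real.exp (-x ^ 2)) := by
  have h := integrable_rpow_mul_exp_neg_mul_sq (b := 1) one_pos (s := 2) (by norm_num)
  apply h.congr
  apply Eventually.of_forall
  intro x
  have hx : x ^ (2:ℝ) = x ^ (2:ℕ) := by
    rw [← Real.rpow_natCast x 2]; norm_num
  simp only [hx]
  norm_num

lemma integrable_gaussian1 : Integrable (fun x : ℝ => Real.exp (-x ^ 2)) := by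
  have h := integrable_exp_neg_mul_sq (b := 1) one_pos
  apply h.congr
  apply Eventually.of_forall
  intro x; norm_num

lemma tendsto_x_gauss_atTop : Tendsto (fun x : ℝ => -x * Real.exp (-x ^ 2) / 2) atTop (nhds 0) := by
  have hhalf : Tendsto (fun x : ℝ => Real.exp (-(1 / 2) * x)) atTop (nhds 0) := by
    have h1 : Tendsto (fun x : ℝ => x * (1/2 : ℝ)) atTop atTop :=
      Tendsto.atTop_mul_const (by norm_num) tendsto_id
    have h2 := tendsto_exp_neg_atTop_nhds_zero.comp h1
    apply h2.congr
    intro x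
    simp [Function.comp]
    ring_nf
  have h := (rpow_mul_exp_neg_mul_sq_isLittleO_exp_neg one_pos 1).tendsto_zero_of_tendsto hhalf
  have h2 : Tendsto (fun x : ℝ => x * Real.exp (-x ^ 2)) atTop (nhds 0) := by
    apply h.congr'
    filter_upwards [eventually_gt_atTop 0] with x hx
    rw [Real.rpow_one]
    norm_num
  have := (h2.neg).div_const 2
  apply this.congr' ?_ |>.mono_right (by simp)
  filter_upwards with x
  ring
lemma tendsto_x_gauss_atBot : Tendsto (fun x : ℝ => -x * Real.exp (-x ^ 2) / 2) atBot (nhds 0) := by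
  have h2 : Tendsto (fun x : ℝ => -(-x) * Real.exp (-(-x) ^ 2) / 2) atTop (nhds 0) := by
    have := tendsto_x_gauss_atTop.neg
    rw [neg_zero] at this
    apply this.congr
    intro x
    ring
  have h3 := h2.comp tendsto_neg_atBot_atTop
  apply h3.congr
  intro x
  simp [Function.comp]

lemma integral_sq_gaussian : ∫ x : ℝ, x ^ 2 * Real.exp (-x ^ 2) = Real.sqrt Real.pi / 2 := by
  have hderiv : ∀ x : ℝ, HasDerivAt (fun x : ℝ => -x * Real.exp (-x ^ 2) / 2)
      (x ^ 2 * Real.exp (-x ^ 2) - Real.exp (-x ^ 2) / 2) x := by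
    intro x
    have h1 : HasDerivAt (fun x : ℝ => -x ^ 2) (-(2 * x)) x := by
      simpa using ((hasDerivAt_pow 2 x).fun_neg)
    have h2 : HasDerivAt (fun x : ℝ => Real.exp (-x ^ 2)) (Real.exp (-x ^ 2) * -(2 * x)) x :=
      (Real.hasDerivAt_exp _).comp x h1
    have h3 : HasDerivAt (fun x : ℝ => -x) (-1) x := by simpa using (hasDerivAt_id x).fun_neg
    have h4 := (h3.fun_mul h2).div_const 2
    refine h4.congr_deriv ?_
    ring
  have hint : Integrable (fun x : ℝ => x ^ 2 * Real.exp (-x ^ 2) - Real.exp (-x ^ 2) / 2) :=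
    integrable_sq_gaussian.sub (integrable_gaussian1.div_const 2)
  have hkey := MeasureTheory.integral_of_hasDerivAt_of_tendsto hderiv hint
    tendsto_x_gauss_atBot tendsto_x_gauss_atTop
  rw [integral_sub integrable_sq_gaussian (integrable_gaussian1.div_const 2)] at hkey
  have hg : ∫ x : ℝ, Real.exp (-x ^ 2) = Real.sqrt Real.pi := by
    have := integral_gaussian 1
    simpa using this
  rw [MeasureTheory.integral_div, hg] at hkey
  linarith

lemma two_sub_two_cos (t : ℝ) : 2 - 2 * Real.cos t = 4 * Real.sin (t / 2) ^ 2 := by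
  have h : Real.sin (t / 2) ^ 2 = (1 - Real.cos t) / 2 := by
    rw [← sq_abs, Real.abs_sin_half, Real.sq_sqrt (by nlinarith [Real.cos_le_one t])]
  rw [h]; ring

lemma sinc_tendsto : Tendsto (fun x : ℝ => Real.sin x / x) (nhdsWithin 0 {(0:ℝ)}ᶜ) (nhds 1) := by
  have h := (Real.hasDerivAt_sin 0)
  rw [hasDerivAt_iff_tendsto_slope] at h
  simp only [Real.cos_zero] at h
  apply h.congr
  intro x
  simp [slope_def_field, Real.sin_zero]

lemma exponent_tendsto (s : ℝ) :
    Tendsto (fun ε : ℝ => (2 - 2 * Real.cos (ε * s)) / ε ^ 2) (nhdsWithin 0 (Set.Ioi 0))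
      (nhds (s ^ 2)) := by
  rcases eq_or_ne s 0 with hs | hs
  · simp only [hs, mul_zero, Real.cos_zero]
    norm_num
  · have hmap : Tendsto (fun ε : ℝ => ε * s / 2) (nhdsWithin 0 (Set.Ioi 0))
        (nhdsWithin 0 {(0:ℝ)}ᶜ) := by
      apply tendsto_nhdsWithin_of_tendsto_nhds_of_eventually_within
      · have : Tendsto (fun ε : ℝ => ε * s / 2) (nhds 0) (nhds (0 * s / 2)) := by
          exact ((continuous_id.mul continuous_const).div_const 2).tendsto 0
        simpa using this.mono_left nhdsWithin_le_nhds
      · filter_upwards [self_mem_nhdsWithin] with ε (hε : 0 < ε)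
        simp only [Set.mem_compl_iff, Set.mem_singleton_iff]
        positivity
    have hcomp := sinc_tendsto.comp hmap
    have hsq : Tendsto (fun ε : ℝ => s ^ 2 * (Real.sin (ε * s / 2) / (ε * s / 2)) ^ 2)
        (nhdsWithin 0 (Set.Ioi 0)) (nhds (s ^ 2 * 1 ^ 2)) :=
      (hcomp.pow 2).const_mul _
    rw [one_pow, mul_one] at hsq
    apply hsq.congr'
    filter_upwards [self_mem_nhdsWithin] with ε (hε : 0 < ε)
    rw [two_sub_two_cos]
    have hε0 : ε ≠ 0 := ne_of_gt hε
    field_simp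
    ring

noncomputable def Afun (ε : ℝ) : ℝ := ∫ θ in (-Real.pi)..Real.pi, wfun ε θ
noncomputable def Bfun (ε : ℝ) : ℝ := ∫ θ in (-Real.pi)..Real.pi, wfun ε θ * (1 - Real.cos θ)

-- substitution for A
lemma Asub {ε : ℝ} (hε : 0 < ε) :
    Afun ε / ε = ∫ s : ℝ,
      (Set.Ioc (-Real.pi/ε) (Real.pi/ε)).indicator (fun s => wfun ε (ε * s)) s := by
  have hle : -Real.pi/ε ≤ Real.pi/ε := by
    have h2 : 0 ≤ Real.pi/ε := by positivity
    rw [neg_div]; linarith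

  have hcomp := intervalIntegral.integral_comp_mul_left (a := -Real.pi/ε) (b := Real.pi/ε)
    (fun θ => wfun ε θ) hε.ne'
  rw [mul_div_cancel₀ _ hε.ne'] at hcomp
  rw [show ε * (Real.pi/ε) = Real.pi by field_simp] at hcomp
  rw [show Afun ε / ε = ε⁻¹ • Afun ε by rw [smul_eq_mul]; ring, Afun, ← hcomp,
    intervalIntegral.integral_of_le hle, ← MeasureTheory.integral_indicator measurableSet_Ioc]

lemma Bsub {ε : ℝ} (hε : 0 < ε) :
    Bfun ε / ε ^ 3 = ∫ s : ℝ,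
      (Set.Ioc (-Real.pi/ε) (Real.pi/ε)).indicator
        (fun s => wfun ε (ε * s) * ((1 - Real.cos (ε * s)) / ε ^ 2)) s := by
  have hle : -Real.pi/ε ≤ Real.pi/ε := by
    have h2 : 0 ≤ Real.pi/ε := by positivity
    rw [neg_div]; linarith

  have hcomp := intervalIntegral.integral_comp_mul_left (a := -Real.pi/ε) (b := Real.pi/ε)
    (fun θ => wfun ε θ * (1 - Real.cos θ)) hε.ne'
  rw [mul_div_cancel₀ _ hε.ne'] at hcomp
  rw [show ε * (Real.pi/ε) = Real.pi by field_simp] at hcomp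
  have h1 : Bfun ε / ε ^ 3 =
      (∫ s in (-Real.pi/ε)..(Real.pi/ε), wfun ε (ε * s) * (1 - Real.cos (ε * s))) / ε ^ 2 := by
    have hY : (∫ x in (-Real.pi)..Real.pi, (fun θ => wfun ε θ * (1 - Real.cos θ)) x) = Bfun ε := rfl
    have hX : (∫ x in (-Real.pi/ε)..(Real.pi/ε), (fun θ => wfun ε θ * (1 - Real.cos θ)) (ε * x))
        = ∫ s in (-Real.pi/ε)..(Real.pi/ε), wfun ε (ε * s) * (1 - Real.cos (ε * s)) := rfl
    rw [hX, hY, smul_eq_mul] at hcomp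
    rw [hcomp]
    field_simp
  rw [h1, intervalIntegral.integral_of_le hle, ← MeasureTheory.integral_indicator measurableSet_Ioc,
    ← MeasureTheory.integral_div]
  congr 1
  ext s
  rw [Set.indicator_apply, Set.indicator_apply]
  by_cases hs : s ∈ Set.Ioc (-Real.pi/ε) (Real.pi/ε) <;> simp [hs, mul_div_assoc]

lemma wfun_composed (ε s : ℝ) :
    wfun ε (ε * s) = Real.exp (-((2 - 2 * Real.cos (ε * s)) / ε ^ 2)) := wfun_eq ε (ε * s)

-- key pointwise bound inside the window
lemma window_bound {ε s : ℝ} (hε : 0 < ε) (hs : s ∈ Set.Ioc (-Real.pi/ε) (Real.pi/ε)) :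
    (4 / Real.pi ^ 2) * s ^ 2 ≤ (2 - 2 * Real.cos (ε * s)) / ε ^ 2 := by
  have hpi := Real.pi_pos
  have habs : |s| ≤ Real.pi / ε := by
    rw [abs_le]
    refine ⟨?_, hs.2⟩
    rw [← neg_div]
    exact hs.1.le
  have hhalf : |ε * s / 2| ≤ Real.pi / 2 := by
    rw [abs_div, abs_mul, abs_of_pos hε, abs_of_pos (show (0:ℝ) < 2 by norm_num)]
    have : ε * |s| ≤ Real.pi := by
      calc ε * |s| ≤ ε * (Real.pi / ε) := by gcongr
        _ = Real.pi := by field_simp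
    linarith
  have hjord := Real.mul_abs_le_abs_sin hhalf
  have hsq : (2 / Real.pi * |ε * s / 2|) ^ 2 ≤ Real.sin (ε * s / 2) ^ 2 := by
    rw [← sq_abs (Real.sin _)]
    apply sq_le_sq' ?_ hjord
    have : 0 ≤ 2 / Real.pi * |ε * s / 2| := by positivity
    linarith [abs_nonneg (Real.sin (ε * s / 2))]
  rw [two_sub_two_cos]
  have hexpand : (2 / Real.pi * |ε * s / 2|) ^ 2 = (ε ^ 2 * s ^ 2) / Real.pi ^ 2 := by
    rw [mul_pow, sq_abs (ε * s / 2)]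
    field_simp
  rw [hexpand] at hsq
  rw [le_div_iff₀ (by positivity : (0:ℝ) < ε ^ 2)]
  calc (4 / Real.pi ^ 2) * s ^ 2 * ε ^ 2 = 4 * ((ε ^ 2 * s ^ 2) / Real.pi ^ 2) := by
        field_simp
    _ ≤ 4 * Real.sin (ε * s / 2) ^ 2 := by gcongr

lemma eventually_mem_window (s : ℝ) :
    ∀ᶠ ε in nhdsWithin 0 (Set.Ioi 0), s ∈ Set.Ioc (-Real.pi/ε) (Real.pi/ε) := by
  have hpi := Real.pi_pos
  have hδ : (0:ℝ) < Real.pi / (|s| + 1) := by positivity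
  filter_upwards [Ioo_mem_nhdsGT_of_mem (Set.mem_Ico.2 ⟨le_refl (0:ℝ), hδ⟩)] with ε hε
  obtain ⟨hε0, hεlt⟩ := hε
  have hkey : |s| + 1 < Real.pi / ε := by
    rw [lt_div_iff₀ hε0]
    calc (|s| + 1) * ε < (|s| + 1) * (Real.pi / (|s| + 1)) := by
          have h1 : (0:ℝ) < |s| + 1 := by positivity
          exact mul_lt_mul_of_pos_left hεlt h1
      _ = Real.pi := by field_simp
  constructor
  · rw [neg_div]
    linarith [neg_abs_le s]
  · linarith [le_abs_self s]

lemma hA_tendsto :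
    Tendsto (fun ε => Afun ε / ε) (nhdsWithin 0 (Set.Ioi 0)) (nhds (Real.sqrt Real.pi)) := by
  have hb : (0:ℝ) < 4 / Real.pi ^ 2 := by positivity
  have hdct := MeasureTheory.tendsto_integral_filter_of_dominated_convergence
    (μ := (volume : Measure ℝ)) (l := nhdsWithin 0 (Set.Ioi 0))
    (F := fun ε (s : ℝ) => (Set.Ioc (-Real.pi/ε) (Real.pi/ε)).indicator (fun s => wfun ε (ε * s)) s)
    (f := fun s : ℝ => Real.exp (-s ^ 2))
    (bound := fun s : ℝ => Real.exp (-(4 / Real.pi ^ 2 * s ^ 2)))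
    ?_ ?_ ?_ ?_
  · have hg : (∫ s : ℝ, Real.exp (-s ^ 2)) = Real.sqrt Real.pi := by
      have := integral_gaussian 1
      simpa using this
    rw [hg] at hdct
    apply hdct.congr'
    filter_upwards [self_mem_nhdsWithin] with ε (hε : 0 < ε)
    exact (Asub hε).symm
  · filter_upwards [self_mem_nhdsWithin] with ε (hε : 0 < ε)
    exact (((lip_w hε).continuous.comp (continuous_const.mul continuous_id)).aestronglyMeasurable).indicator
      measurableSet_Ioc
  · filter_upwards [self_mem_nhdsWithin] with ε (hε : 0 < ε)
    apply ae_of_all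
    intro s
    by_cases hs : s ∈ Set.Ioc (-Real.pi/ε) (Real.pi/ε)
    · rw [Set.indicator_of_mem hs, Real.norm_eq_abs, wfun_composed,
        abs_of_pos (Real.exp_pos _)]
      apply Real.exp_le_exp.2
      apply neg_le_neg
      exact window_bound hε hs
    · rw [Set.indicator_of_notMem hs, norm_zero]
      exact (Real.exp_pos _).le
  · apply (integrable_exp_neg_mul_sq hb).congr
    apply Eventually.of_forall
    intro x
    show Real.exp (-(4 / Real.pi ^ 2) * x ^ 2) = Real.exp (-(4 / Real.pi ^ 2 * x ^ 2))
    rw [neg_mul]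
  · apply ae_of_all
    intro s
    have hExp : Tendsto (fun ε => Real.exp (-((2 - 2 * Real.cos (ε * s)) / ε ^ 2)))
        (nhdsWithin 0 (Set.Ioi 0)) (nhds (Real.exp (-s ^ 2))) :=
      (Real.continuous_exp.tendsto _).comp (exponent_tendsto s).neg
    apply hExp.congr'
    filter_upwards [eventually_mem_window s] with ε hw
    rw [Set.indicator_of_mem hw, wfun_composed]

lemma hB_tendsto :
    Tendsto (fun ε => Bfun ε / ε ^ 3) (nhdsWithin 0 (Set.Ioi 0))
      (nhds (Real.sqrt Real.pi / 4)) := by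
  have hb : (0:ℝ) < 4 / Real.pi ^ 2 := by positivity
  have hdct := MeasureTheory.tendsto_integral_filter_of_dominated_convergence
    (μ := (volume : Measure ℝ)) (l := nhdsWithin 0 (Set.Ioi 0))
    (F := fun ε (s : ℝ) => (Set.Ioc (-Real.pi/ε) (Real.pi/ε)).indicator
      (fun s => wfun ε (ε * s) * ((1 - Real.cos (ε * s)) / ε ^ 2)) s)
    (f := fun s : ℝ => Real.exp (-s ^ 2) * (s ^ 2 / 2))
    (bound := fun s : ℝ => Real.exp (-(4 / Real.pi ^ 2 * s ^ 2)) * (s ^ 2 / 2))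
    ?_ ?_ ?_ ?_
  · have hg : (∫ s : ℝ, Real.exp (-s ^ 2) * (s ^ 2 / 2)) = Real.sqrt Real.pi / 4 := by
      have h1 : (∫ s : ℝ, Real.exp (-s ^ 2) * (s ^ 2 / 2))
          = (∫ s : ℝ, s ^ 2 * Real.exp (-s ^ 2)) / 2 := by
        rw [← MeasureTheory.integral_div]
        congr 1; ext s; ring
      rw [h1, integral_sq_gaussian]
      ring
    rw [hg] at hdct
    apply hdct.congr'
    filter_upwards [self_mem_nhdsWithin] with ε (hε : 0 < ε)
    exact (Bsub hε).symm
  · filter_upwards [self_mem_nhdsWithin] with ε (hε : 0 < ε)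
    have hc : Continuous (fun s : ℝ => wfun ε (ε * s) * ((1 - Real.cos (ε * s)) / ε ^ 2)) := by
      apply Continuous.mul
      · exact (lip_w hε).continuous.comp (continuous_const.mul continuous_id)
      · exact ((continuous_const.sub ((Real.continuous_cos).comp
          (continuous_const.mul continuous_id))).div_const _)
    exact (hc.aestronglyMeasurable).indicator measurableSet_Ioc
  · filter_upwards [self_mem_nhdsWithin] with ε (hε : 0 < ε)
    apply ae_of_all
    intro s
    by_cases hs : s ∈ Set.Ioc (-Real.pi/ε) (Real.pi/ε)
    · rw [Set.indicator_of_mem hs, Real.norm_eq_abs]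
      have hcos : Real.cos (ε * s) ≤ 1 := Real.cos_le_one _
      have hnn : 0 ≤ wfun ε (ε * s) * ((1 - Real.cos (ε * s)) / ε ^ 2) := by
        apply mul_nonneg (Real.exp_pos _).le
        apply div_nonneg (by linarith) (sq_nonneg _)
      rw [abs_of_nonneg hnn]
      apply mul_le_mul
      · rw [wfun_composed]
        exact Real.exp_le_exp.2 (neg_le_neg (window_bound hε hs))
      · -- (1 - cos(εs))/ε² ≤ s²/2
        have h2 : 1 - Real.cos (ε * s) ≤ (ε * s) ^ 2 / 2 := by
          have := two_sub_two_cos (ε * s)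
          have hsin : Real.sin (ε * s / 2) ^ 2 ≤ (ε * s / 2) ^ 2 := Real.sin_sq_le_sq
          nlinarith
        rw [div_le_iff₀ (by positivity : (0:ℝ) < ε ^ 2)]
        calc 1 - Real.cos (ε * s) ≤ (ε * s) ^ 2 / 2 := h2
          _ = s ^ 2 / 2 * ε ^ 2 := by ring
      · apply div_nonneg (by linarith) (sq_nonneg _)
      · exact (Real.exp_pos _).le
    · rw [Set.indicator_of_notMem hs, norm_zero]
      positivity
  · have h := (integrable_rpow_mul_exp_neg_mul_sq hb (s := 2) (by norm_num)).div_const 2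
    apply h.congr
    apply Eventually.of_forall
    intro x
    have hx : x ^ (2:ℝ) = x ^ (2:ℕ) := by
      rw [← Real.rpow_natCast x 2]; norm_num
    show x ^ (2:ℝ) * Real.exp (-(4 / Real.pi ^ 2) * x ^ 2) / 2
        = Real.exp (-(4 / Real.pi ^ 2 * x ^ 2)) * (x ^ 2 / 2)
    rw [hx, neg_mul]
    push_cast
    ring
  · apply ae_of_all
    intro s
    have hExp : Tendsto (fun ε => Real.exp (-((2 - 2 * Real.cos (ε * s)) / ε ^ 2)))
        (nhdsWithin 0 (Set.Ioi 0)) (nhds (Real.exp (-s ^ 2))) :=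
      (Real.continuous_exp.tendsto _).comp (exponent_tendsto s).neg
    have hHalf : Tendsto (fun ε => ((2 - 2 * Real.cos (ε * s)) / ε ^ 2) / 2)
        (nhdsWithin 0 (Set.Ioi 0)) (nhds (s ^ 2 / 2)) := (exponent_tendsto s).div_const 2
    have hmul := hExp.mul hHalf
    apply hmul.congr'
    filter_upwards [eventually_mem_window s] with ε hw
    rw [Set.indicator_of_mem hw, wfun_composed]
    congr 1
    ring

lemma wfun_periodic (ε : ℝ) : Function.Periodic (wfun ε) (2 * Real.pi) := by
  intro θ
  simp [wfun, Real.cos_add_two_pi]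

lemma shiftA (ε : ℝ) : (∫ θ in (0:ℝ)..(2 * Real.pi), wfun ε θ) = Afun ε := by
  have h := (wfun_periodic ε).intervalIntegral_add_eq 0 (-Real.pi)
  rw [zero_add, show -Real.pi + 2 * Real.pi = Real.pi by ring] at h
  exact h

lemma shiftC (ε : ℝ) : (∫ θ in (0:ℝ)..(2 * Real.pi), wfun ε θ * Real.cos θ)
    = ∫ θ in (-Real.pi)..Real.pi, wfun ε θ * Real.cos θ := by
  have hper : Function.Periodic (fun θ => wfun ε θ * Real.cos θ) (2 * Real.pi) := by
    intro θ
    simp [wfun, Real.cos_add_two_pi]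
  have h := hper.intervalIntegral_add_eq 0 (-Real.pi)
  rw [zero_add, show -Real.pi + 2 * Real.pi = Real.pi by ring] at h
  exact h

lemma Bfun_eq {ε : ℝ} (hε : 0 < ε) :
    Bfun ε = Afun ε - ∫ θ in (-Real.pi)..Real.pi, wfun ε θ * Real.cos θ := by
  have hw : Continuous (wfun ε) := (lip_w hε).continuous
  rw [Bfun, Afun, ← intervalIntegral.integral_sub (hw.intervalIntegrable _ _)
    (Continuous.intervalIntegrable (u := fun θ => wfun ε θ * Real.cos θ) (hw.mul Real.continuous_cos) _ _)]
  congr 1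
  ext θ
  ring

lemma Gfun_eq {ε : ℝ} (hε : 0 < ε) :
    Gfun ε = -4 * ((Bfun ε / ε ^ 3) / (Afun ε / ε)) := by
  have hA0 : 0 < Afun ε := by rw [← shiftA]; exact I0_pos hε
  rw [Gfun, shiftC, shiftA]
  have h1 : (∫ θ in (-Real.pi)..Real.pi, wfun ε θ * Real.cos θ) = Afun ε - Bfun ε := by
    rw [Bfun_eq hε]; ring
  rw [h1]
  field_simp
  ring

lemma part2 : Tendsto Gfun (nhdsWithin 0 (Set.Ioi 0)) (nhds (-1)) := by
  have hπ : Real.sqrt Real.pi ≠ 0 := ne_of_gt (Real.sqrt_pos.2 Real.pi_pos)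
  have h := (hB_tendsto.div hA_tendsto hπ).const_mul (-4 : ℝ)
  have hval : (-4 : ℝ) * (Real.sqrt Real.pi / 4 / Real.sqrt Real.pi) = -1 := by
    field_simp
  rw [hval] at h
  apply h.congr'
  filter_upwards [self_mem_nhdsWithin] with ε (hε : 0 < ε)
  exact (Gfun_eq hε).symm

/-- Convergence of the graph Laplacian to the Laplace–Beltrami operator on the
circle: as `N → ∞` and then `ε → 0⁺`, the value `(4/ε²)(M - I)v` at `θ = 0`
for `v(θ) = cos θ` converges to `Δ_{S¹}v(0) = -cos 0 = -1`. -/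
theorem circle_graph_laplacian_converges :
    ∃ G : ℝ → ℝ,
      (∀ ε : ℝ, 0 < ε →
        Filter.Tendsto (fun N : ℕ => circleGraphLap N ε) Filter.atTop
          (nhds (G ε))) ∧
      Filter.Tendsto G (nhdsWithin 0 (Set.Ioi 0)) (nhds (-1)) := by
  exact ⟨Gfun, fun ε hε => part1 hε, part2⟩
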